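/- arXiv:math/0409528 — 4 statements merged into one kernel-verified Lean document; each statement's English description precedes it below -/
import Mathlib

section
/- Let α be a measurable space and φ : ℝ → α → α a jointly measurable flow, i.e., (t,x) ↦ φ t x is measurable, φ 0 x = x and φ (s+t) x = φ s (φ t x) for all s,t,x. Let μ be a probability measure on α that is invariant under φ t for every t. Let u, q : α → ℝ be measurable functions such that u² and q are μ-integrable, and suppose that for μ-almost every x the function t ↦ u (φ t x) is continuously differentiable on ℝ and satisfies the Riccati equation (d/dt) u(φ t x) + (u(φ t x))² + q(φ t x) = 0 for all t ∈ ℝ. Then ∫ u² dμ + ∫ q dμ = 0. -/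
open MeasureTheory

/-- The integrated Riccati (E. Hopf) argument: if `φ` is a jointly measurable flow
preserving a probability measure `μ`, and `u` satisfies the Riccati equation
`u̇ + u² + q = 0` along `μ`-almost every orbit, with `u²` and `q` integrable, then
`∫ u² dμ + ∫ q dμ = 0`. -/
theorem integrated_riccati {α : Type*} [MeasurableSpace α]
    (φ : ℝ → α → α)
    (hφ_meas : Measurable fun p : ℝ × α => φ p.1 p.2)
    (hφ_zero : ∀ x, φ 0 x = x)
    (hφ_add : ∀ s t x, φ (s + t) x = φ s (φ t x))
    (μ : Measure α) [IsProbabilityMeasure μ]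
    (hinv : ∀ t, MeasurePreserving (φ t) μ μ)
    (u q : α → ℝ) (hu : Measurable u) (hq : Measurable q)
    (hu2 : Integrable (fun x => (u x) ^ 2) μ) (hqi : Integrable q μ)
    (hric : ∀ᵐ x ∂μ,
      ContDiff ℝ 1 (fun t : ℝ => u (φ t x)) ∧
      ∀ t : ℝ, deriv (fun s : ℝ => u (φ s x)) t + (u (φ t x)) ^ 2 + q (φ t x) = 0) :
    (∫ x, (u x) ^ 2 ∂μ) + (∫ x, q x ∂μ) = 0 := by
  set F : α → ℝ := fun x => u x ^ 2 + q x with hF_def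
  have hFmeas : Measurable F := (hu.pow_const 2).add hq
  have hFint : Integrable F μ := hu2.add hqi
  have huint : Integrable u μ := by
    have h2 : MemLp u 2 μ := (memLp_two_iff_integrable_sq hu.aestronglyMeasurable).2 hu2
    exact h2.integrable one_le_two
  -- invariance of integrals
  have hmapint : ∀ (t : ℝ) (G : α → ℝ), Measurable G →
      ∫ x, G (φ t x) ∂μ = ∫ x, G x ∂μ := by
    intro t G hG
    rw [← integral_map (hinv t).measurable.aemeasurable hG.aestronglyMeasurable,
      (hinv t).map_eq]
  have hcomp : ∀ t : ℝ, Integrable (fun x => F (φ t x)) μ := fun t =>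
    ((hinv t).integrable_comp hFint.aestronglyMeasurable).2 hFint
  set ν : Measure ℝ := volume.restrict (Set.Ioc (0:ℝ) 1) with hν
  have hνuniv : ν Set.univ = 1 := by
    simp [hν, Real.volume_Ioc]
  have : IsProbabilityMeasure ν := ⟨hνuniv⟩
  -- integrability on the product
  have hGmeas : Measurable fun p : ℝ × α => F (φ p.1 p.2) := hFmeas.comp hφ_meas
  have hGint : Integrable (fun p : ℝ × α => F (φ p.1 p.2)) (ν.prod μ) := by
    rw [integrable_prod_iff hGmeas.aestronglyMeasurable]
    constructor
    · exact Filter.Eventually.of_forall fun t => hcomp t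
    · have hconst : (fun t : ℝ => ∫ x, ‖F (φ t x)‖ ∂μ) = fun _ => ∫ x, ‖F x‖ ∂μ := by
        funext t
        exact hmapint t (fun x => ‖F x‖) hFmeas.norm
      rw [hconst]
      exact integrable_const _
  have hswap : Integrable (fun p : α × ℝ => F (φ p.2 p.1)) (μ.prod ν) := by
    have := hGint.swap
    exact this
  -- Fubini
  have hfub : ∫ x, (∫ t, F (φ t x) ∂ν) ∂μ = ∫ x, F x ∂μ := by
    rw [integral_integral_swap hswap]
    have : (fun t : ℝ => ∫ x, F (φ t x) ∂μ) = fun _ => ∫ x, F x ∂μ := by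
      funext t; exact hmapint t F hFmeas
    rw [this, integral_const]
    simp [hνuniv]
  -- FTC along orbits
  have hae : ∀ᵐ x ∂μ, (∫ t, F (φ t x) ∂ν) = u x - u (φ 1 x) := by
    filter_upwards [hric] with x hx
    obtain ⟨h1, h2⟩ := hx
    set h : ℝ → ℝ := fun t => u (φ t x) with hh
    have hd : ∀ t, HasDerivAt h (deriv h t) t := fun t =>
      (h1.differentiable one_ne_zero t).hasDerivAt
    have hcont : Continuous (deriv h) := h1.continuous_deriv le_rfl
    have hkey : ∫ t in (0:ℝ)..1, deriv h t = h 1 - h 0 :=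
      intervalIntegral.integral_eq_sub_of_hasDerivAt (fun t _ => hd t)
        (hcont.intervalIntegrable 0 1)
    have hder : ∀ t, deriv h t = -(F (φ t x)) := by
      intro t
      have := h2 t
      simp only [hF_def]
      linarith
    have : ∫ t in (0:ℝ)..1, (-(F (φ t x))) = h 1 - h 0 := by
      rw [← hkey]
      exact intervalIntegral.integral_congr fun t _ => (hder t).symm
    have h01 : ∫ t in (0:ℝ)..1, F (φ t x) = h 0 - h 1 := by
      rw [intervalIntegral.integral_neg] at this
      linarith
    rw [intervalIntegral.integral_of_le (by norm_num : (0:ℝ) ≤ 1)] at h01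
    rw [hν]
    rw [h01, hh]
    simp [hφ_zero]
  -- integrate the a.e. identity
  have hphi1 : Integrable (fun x => u (φ 1 x)) μ :=
    ((hinv 1).integrable_comp huint.aestronglyMeasurable).2 huint
  have hzero : ∫ x, (∫ t, F (φ t x) ∂ν) ∂μ = 0 := by
    rw [integral_congr_ae hae, integral_sub huint hphi1, hmapint 1 u hu, sub_self]
  have hFsplit : ∫ x, F x ∂μ = (∫ x, (u x) ^ 2 ∂μ) + (∫ x, q x ∂μ) := by
    simp only [hF_def]
    exact integral_add hu2 hqi
  rw [← hFsplit, ← hfub, hzero]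
end

section
/- Let E be a finite-dimensional real inner product space, θ : E → (E →L[ℝ] ℝ) a continuous map, k > 0 and 0 < ε ≤ k with (1/2)‖θ x‖² ≤ k - ε for all x ∈ E. For T > 0 and a continuous, piecewise continuously differentiable curve γ : [0,T] → E, set A_{L+k}(γ) = ∫₀ᵀ ((1/2)‖γ'(t)‖² - θ (γ t) (γ'(t)) + k) dt, and for x, y ∈ E define Φ_k(x,y) as the infimum of A_{L+k}(γ) over all T > 0 and all such curves with γ 0 = x and γ T = y. Then for all x, y ∈ E, Φ_k(x,y) ≥ (ε / Real.sqrt (2*k)) * ‖x - y‖. -/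
open Set MeasureTheory

variable {E : Type*} [NormedAddCommGroup E] [InnerProductSpace ℝ E] [FiniteDimensional ℝ E]

/-- `γ : ℝ → E` is a continuous, piecewise continuously differentiable curve on `[0,T]`
with derivative `γ'`: it is continuous on `[0,T]`, differentiable with derivative `γ' t`
off a finite set, `γ'` is continuous off that finite set, and `γ'` and `‖γ'‖²` are
integrable on `[0,T]`. -/
def IsPiecewiseC1On (γ γ' : ℝ → E) (T : ℝ) : Prop :=
  ContinuousOn γ (Set.Icc 0 T) ∧
  (∃ s : Finset ℝ,
    (∀ t ∈ Set.Ioo 0 T, t ∉ s → HasDerivAt γ (γ' t) t) ∧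
    ContinuousOn γ' (Set.Icc 0 T \ (s : Set ℝ))) ∧
  IntervalIntegrable γ' volume 0 T ∧
  IntervalIntegrable (fun t => ‖γ' t‖ ^ 2) volume 0 T

/-- The action `A_{L+k}` of the magnetic Lagrangian `L(x,v) = (1/2)‖v‖² - θ_x(v)` plus `k`
on the curve `(γ, γ')` over `[0,T]`. -/
noncomputable def magAction (θ : E → (E →L[ℝ] ℝ)) (k T : ℝ) (γ γ' : ℝ → E) : ℝ :=
  ∫ t in (0:ℝ)..T, ((1/2) * ‖γ' t‖ ^ 2 - θ (γ t) (γ' t) + k)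

/-- Mañé's action potential `Φ_k(x,y)`: the infimum of `A_{L+k}` over all `T > 0` and all
continuous, piecewise `C¹` curves on `[0,T]` from `x` to `y`. -/
noncomputable def manePotential (θ : E → (E →L[ℝ] ℝ)) (k : ℝ) (x y : E) : ℝ :=
  sInf {a : ℝ | ∃ T > (0:ℝ), ∃ γ γ' : ℝ → E,
    IsPiecewiseC1On γ γ' T ∧ γ 0 = x ∧ γ T = y ∧ a = magAction θ k T γ γ'}

/-- Pointwise inequality: `(ε/√(2k)) n ≤ (1/2) n² - a n + k` when `(1/2)a² ≤ k - ε`. -/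
lemma mane_pointwise (k ε a n : ℝ) (hk : 0 < k) (hε : 0 < ε) (hεk : ε ≤ k)
    (hn : 0 ≤ n) (h : (1/2) * a ^ 2 ≤ k - ε) :
    (ε / Real.sqrt (2*k)) * n ≤ (1/2) * n ^ 2 - a * n + k := by
  set s := Real.sqrt (2*k) with hs
  have hs0 : 0 < s := Real.sqrt_pos.2 (by linarith)
  have hs2 : s ^ 2 = 2 * k := Real.sq_sqrt (by linarith)
  have key : a * s ≤ s ^ 2 - ε := by nlinarith [sq_nonneg (a * s - (s^2 - ε)), sq_nonneg (a*s)]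
  have hε' : ε / s * s = ε := div_mul_cancel₀ _ hs0.ne'
  have h2 : (a + ε / s) * n ≤ s * n := by
    have : a + ε / s ≤ s := by nlinarith [key, hε', hs0]
    nlinarith
  nlinarith [sq_nonneg (n - s), mul_pos hε hs0]

/-- Lower bound for Mañé's action potential: if `(1/2)‖θ_x‖² ≤ k - ε` everywhere, then
`Φ_k(x,y) ≥ (ε/√(2k)) ‖x - y‖`. -/
theorem manePotential_lower_bound
    (θ : E → (E →L[ℝ] ℝ)) (hθc : Continuous θ)
    (k ε : ℝ) (hk : 0 < k) (hε : 0 < ε) (hεk : ε ≤ k)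
    (hθk : ∀ x : E, (1/2) * ‖θ x‖ ^ 2 ≤ k - ε)
    (x y : E) :
    (ε / Real.sqrt (2 * k)) * ‖x - y‖ ≤ manePotential θ k x y := by
  set c := ε / Real.sqrt (2 * k) with hc
  -- the set of actions is nonempty: use the straight segment
  have hne : {a : ℝ | ∃ T > (0:ℝ), ∃ γ γ' : ℝ → E,
      IsPiecewiseC1On γ γ' T ∧ γ 0 = x ∧ γ T = y ∧ a = magAction θ k T γ γ'}.Nonempty := by
    refine ⟨magAction θ k 1 (fun t => x + t • (y - x)) (fun _ => y - x),
      1, one_pos, _, _, ⟨?_, ⟨∅, ?_, continuousOn_const⟩,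
        intervalIntegrable_const, intervalIntegrable_const⟩, by simp, by simp, rfl⟩
    · exact (continuous_const.add (continuous_id.smul continuous_const)).continuousOn
    · intro t _ _
      have := ((hasDerivAt_id t).smul_const (y - x)).const_add x
      simpa using this
  refine le_csInf hne ?_
  rintro a ⟨T, hT, γ, γ', ⟨hcon, ⟨s, hd, _⟩, hi1, hi2⟩, h0, hTy, rfl⟩
  -- bound on ‖θ (γ t)‖ over the compact interval (not needed: it's uniform); integrability of
  -- the middle term
  have hC : ∃ C, ∀ t ∈ Icc (0:ℝ) T, ‖θ (γ t)‖ ≤ C :=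
    isCompact_Icc.exists_bound_of_continuousOn (hθc.comp_continuousOn hcon)
  obtain ⟨C, hCb⟩ := hC
  have hγ'm : AEStronglyMeasurable γ' (volume.restrict (Ioc (0:ℝ) T)) := by
    have := hi1.1
    exact this.aestronglyMeasurable
  have hθγm : AEStronglyMeasurable (fun t => θ (γ t)) (volume.restrict (Ioc (0:ℝ) T)) :=
    ((hθc.comp_continuousOn hcon).mono Ioc_subset_Icc_self).aestronglyMeasurable
      measurableSet_Ioc
  have hmidm : AEStronglyMeasurable (fun t => θ (γ t) (γ' t))
      (volume.restrict (Ioc (0:ℝ) T)) :=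
    (ContinuousLinearMap.id ℝ (E →L[ℝ] ℝ)).aestronglyMeasurable_comp₂ hθγm hγ'm
  have hmid : IntervalIntegrable (fun t => θ (γ t) (γ' t)) volume 0 T := by
    rw [intervalIntegrable_iff_integrableOn_Ioc_of_le hT.le]
    refine Integrable.mono' ((hi1.1.norm).const_mul C) hmidm ?_
    filter_upwards [ae_restrict_mem measurableSet_Ioc] with t ht
    calc ‖θ (γ t) (γ' t)‖ ≤ ‖θ (γ t)‖ * ‖γ' t‖ := (θ (γ t)).le_opNorm _
      _ ≤ C * ‖γ' t‖ := by
          have h0C : (0:ℝ) ≤ ‖γ' t‖ := norm_nonneg _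
          have := hCb t (Ioc_subset_Icc_self ht)
          nlinarith [norm_nonneg (θ (γ t))]
  have hF : IntervalIntegrable (fun t => (1/2) * ‖γ' t‖ ^ 2 - θ (γ t) (γ' t) + k) volume 0 T :=
    ((hi2.const_mul (1/2)).sub hmid).add intervalIntegrable_const
  have hN : IntervalIntegrable (fun t => c * ‖γ' t‖) volume 0 T := hi1.norm.const_mul c
  have hmono : ∫ t in (0:ℝ)..T, c * ‖γ' t‖ ≤ magAction θ k T γ γ' := by
    refine intervalIntegral.integral_mono_on hT.le hN hF ?_
    intro t ht
    have hle : θ (γ t) (γ' t) ≤ ‖θ (γ t)‖ * ‖γ' t‖ :=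
      le_trans (le_abs_self _) ((θ (γ t)).le_opNorm _)
    have := mane_pointwise k ε ‖θ (γ t)‖ ‖γ' t‖ hk hε hεk (norm_nonneg _) (hθk (γ t))
    linarith
  have hftc : ∫ t in (0:ℝ)..T, γ' t = y - x := by
    rw [MeasureTheory.integral_eq_of_hasDerivAt_off_countable_of_le γ γ' hT.le
      s.countable_toSet hcon (fun t ht => hd t ht.1 ht.2) hi1, h0, hTy]
  have hnormle : c * ‖x - y‖ ≤ ∫ t in (0:ℝ)..T, c * ‖γ' t‖ := by
    rw [intervalIntegral.integral_const_mul]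
    have h1 : ‖x - y‖ = ‖∫ t in (0:ℝ)..T, γ' t‖ := by rw [hftc, norm_sub_rev]
    have h2 : ‖∫ t in (0:ℝ)..T, γ' t‖ ≤ ∫ t in (0:ℝ)..T, ‖γ' t‖ :=
      intervalIntegral.norm_integral_le_integral_norm hT.le
    have hc0 : 0 ≤ c := div_nonneg hε.le (Real.sqrt_nonneg _)
    rw [h1]
    exact mul_le_mul_of_nonneg_left h2 hc0
  linarith
end

section
/- Let E be a finite-dimensional real inner product space, θ : E → (E →L[ℝ] ℝ) a continuous map, and k ∈ ℝ with (1/2)‖θ x‖² ≤ k for all x ∈ E. For T > 0 and a continuous, piecewise continuously differentiable curve γ : [0,T] → E, set A_{L+k}(γ) = ∫₀ᵀ ((1/2)‖γ'(t)‖² - θ (γ t) (γ'(t)) + k) dt, and for x, y ∈ E define Φ_k(x,y) as the infimum of A_{L+k}(γ) over all T > 0 and all such curves with γ 0 = x and γ T = y. Let ψ : E ≃ᵢ E be a surjective isometry of E (necessarily affine, with linear part Dψ a linear isometry), and define the pullback 1-form (ψ*θ) x = (θ (ψ x)) ∘ Dψ. Suppose f : E → ℝ is differentiable with fderiv f x =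 θ x - (ψ*θ) x for all x ∈ E. Then for all x, y ∈ E, Φ_k(ψ x, ψ y) = Φ_k(x, y) + f y - f x. -/
open Set MeasureTheory

variable {E : Type*} [NormedAddCommGroup E] [InnerProductSpace ℝ E] [FiniteDimensional ℝ E]

/-- The pullback `ψ*θ` of a 1-form `θ` under a surjective isometry `ψ` of `E`
(necessarily affine by Mazur–Ulam, with linear part `Dψ` a linear isometry):
`(ψ*θ)_x = θ_{ψ x} ∘ Dψ`. -/
noncomputable def isometryPullback (ψ : E ≃ᵢ E) (θ : E → (E →L[ℝ] ℝ)) :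
    E → (E →L[ℝ] ℝ) := fun x =>
  (θ (ψ x)).comp
    (ψ.toRealAffineIsometryEquiv.linearIsometryEquiv.toContinuousLinearEquiv :
      E →L[ℝ] E)

/-- Pairing a continuous family of functionals with an integrable curve is integrable. -/
lemma pairing_intervalIntegrable {T : ℝ} (hT : 0 ≤ T) {B : ℝ → E →L[ℝ] ℝ}
    (hB : ContinuousOn B (Icc 0 T)) {δ : ℝ → E}
    (hδ : IntervalIntegrable δ volume 0 T) :
    IntervalIntegrable (fun t => B t (δ t)) volume 0 T := by
  rw [intervalIntegrable_iff, uIoc_of_le hT] at hδ ⊢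
  obtain ⟨C, hC⟩ := isCompact_Icc.exists_bound_of_continuousOn hB
  have hBm : AEStronglyMeasurable B (volume.restrict (Ioc (0:ℝ) T)) :=
    (hB.mono Ioc_subset_Icc_self).aestronglyMeasurable measurableSet_Ioc
  have hmeas : AEStronglyMeasurable (fun t => B t (δ t))
      (volume.restrict (Ioc (0:ℝ) T)) :=
    isBoundedBilinearMap_apply.continuous.comp_aestronglyMeasurable
      (hBm.prodMk hδ.aestronglyMeasurable)
  refine (hδ.norm.const_mul C).mono' hmeas ?_
  filter_upwards [ae_restrict_mem measurableSet_Ioc] with t ht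
  calc ‖B t (δ t)‖ ≤ ‖B t‖ * ‖δ t‖ := (B t).le_opNorm _
    _ ≤ C * ‖δ t‖ :=
      mul_le_mul_of_nonneg_right (hC t (Ioc_subset_Icc_self ht)) (norm_nonneg _)

omit [FiniteDimensional ℝ E] in
/-- Transport of piecewise-`C¹` curves by an affine linear isometry. -/
lemma isPiecewiseC1On_isoComp {γ γ' : ℝ → E} {T : ℝ} (h : IsPiecewiseC1On γ γ' T)
    (D : E ≃ₗᵢ[ℝ] E) (c : E) :
    IsPiecewiseC1On (fun t => D (γ t) + c) (fun t => D (γ' t)) T := by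
  obtain ⟨hcont, ⟨s, hd, hc'⟩, hi1, hi2⟩ := h
  refine ⟨(D.continuous.comp_continuousOn hcont).add continuousOn_const,
    ⟨s, ?_, D.continuous.comp_continuousOn hc'⟩, ?_, ?_⟩
  · intro t ht hts
    have h1 := ((D.toContinuousLinearEquiv : E →L[ℝ] E).hasFDerivAt.comp_hasDerivAt t
      (hd t ht hts)).add_const c
    exact h1
  · rw [intervalIntegrable_iff] at hi1 ⊢
    exact (D.toContinuousLinearEquiv : E →L[ℝ] E).integrable_comp hi1
  · simpa only [D.norm_map] using hi2

/-- The action of the transported curve. -/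
lemma magAction_isometry (θ : E → (E →L[ℝ] ℝ)) (hθc : Continuous θ) (k : ℝ)
    (ψ : E ≃ᵢ E) (f : E → ℝ) (hf : Differentiable ℝ f)
    (hdf : ∀ x : E, fderiv ℝ f x = θ x - isometryPullback ψ θ x)
    {T : ℝ} (hT : 0 ≤ T) {γ γ' : ℝ → E} (h : IsPiecewiseC1On γ γ' T) :
    magAction θ k T (fun t => ψ (γ t))
      (fun t => ψ.toRealAffineIsometryEquiv.linearIsometryEquiv (γ' t))
      = magAction θ k T γ γ' + (f (γ T) - f (γ 0)) := by
  set D := ψ.toRealAffineIsometryEquiv.linearIsometryEquiv with hD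
  obtain ⟨hcont, ⟨s, hd, hc'⟩, hi1, hi2⟩ := h
  have hθγ : ContinuousOn (fun t => θ (γ t)) (Icc 0 T) := hθc.comp_continuousOn hcont
  have hI1 : IntervalIntegrable (fun t => θ (γ t) (γ' t)) volume 0 T :=
    pairing_intervalIntegrable hT hθγ hi1
  have hiD : IntervalIntegrable (fun t => D (γ' t)) volume 0 T := by
    rw [intervalIntegrable_iff] at hi1 ⊢
    exact (D.toContinuousLinearEquiv : E →L[ℝ] E).integrable_comp hi1
  have hθψγ : ContinuousOn (fun t => θ (ψ (γ t))) (Icc 0 T) :=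
    hθc.comp_continuousOn (ψ.continuous.comp_continuousOn hcont)
  have hI2 : IntervalIntegrable (fun t => θ (ψ (γ t)) (D (γ' t))) volume 0 T :=
    pairing_intervalIntegrable hT hθψγ hiD
  have hg' : IntervalIntegrable (fun t => (fderiv ℝ f (γ t)) (γ' t)) volume 0 T := by
    have heq : (fun t => (fderiv ℝ f (γ t)) (γ' t))
        = fun t => θ (γ t) (γ' t) - θ (ψ (γ t)) (D (γ' t)) := by
      funext t; rw [hdf (γ t)]; rfl
    rw [heq]; exact hI1.sub hI2
  have hA : IntervalIntegrable
      (fun t => (1/2) * ‖γ' t‖ ^ 2 - θ (γ t) (γ' t) + k) volume 0 T :=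
    ((hi2.const_mul (1/2)).sub hI1).add intervalIntegrable_const
  have hFTC : (∫ t in (0:ℝ)..T, (fderiv ℝ f (γ t)) (γ' t)) = f (γ T) - f (γ 0) := by
    refine integral_eq_of_hasDerivAt_off_countable_of_le (fun t => f (γ t))
      (fun t => (fderiv ℝ f (γ t)) (γ' t)) hT s.countable_toSet
      (hf.continuous.comp_continuousOn hcont) (fun t ht => ?_) hg'
    exact (hf (γ t)).hasFDerivAt.comp_hasDerivAt t
      (hd t ht.1 (fun hm => ht.2 hm))
  have key : ∀ t, (1/2) * ‖D (γ' t)‖ ^ 2 - θ (ψ (γ t)) (D (γ' t)) + k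
      = ((1/2) * ‖γ' t‖ ^ 2 - θ (γ t) (γ' t) + k) + (fderiv ℝ f (γ t)) (γ' t) := by
    intro t
    rw [hdf (γ t)]
    have hp : (θ (γ t) - isometryPullback ψ θ (γ t)) (γ' t)
        = θ (γ t) (γ' t) - θ (ψ (γ t)) (D (γ' t)) := rfl
    rw [hp, D.norm_map]; ring
  calc magAction θ k T (fun t => ψ (γ t)) (fun t => D (γ' t))
      = ∫ t in (0:ℝ)..T,
          (((1/2) * ‖γ' t‖ ^ 2 - θ (γ t) (γ' t) + k) + (fderiv ℝ f (γ t)) (γ' t)) := by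
        simp only [magAction]
        exact intervalIntegral.integral_congr fun t _ => key t
    _ = magAction θ k T γ γ' + (f (γ T) - f (γ 0)) := by
        rw [intervalIntegral.integral_add hA hg', hFTC]; rfl

/-- Equivariance of Mañé's action potential under an isometry `ψ`: if
`df = θ - ψ*θ`, then `Φ_k(ψ x, ψ y) = Φ_k(x, y) + f y - f x`. -/
theorem manePotential_equivariance
    (θ : E → (E →L[ℝ] ℝ)) (hθc : Continuous θ)
    (k : ℝ) (hθk : ∀ x : E, (1/2) * ‖θ x‖ ^ 2 ≤ k)
    (ψ : E ≃ᵢ E)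
    (f : E → ℝ) (hf : Differentiable ℝ f)
    (hdf : ∀ x : E, fderiv ℝ f x = θ x - isometryPullback ψ θ x)
    (x y : E) :
    manePotential θ k (ψ x) (ψ y) = manePotential θ k x y + f y - f x := by
  set D := ψ.toRealAffineIsometryEquiv.linearIsometryEquiv with hD
  have hψ : ∀ z : E, ψ z = D z + ψ 0 := by
    intro z
    have h := ψ.toRealAffineIsometryEquiv.map_vadd (0 : E) z
    simp only [vadd_eq_add, add_zero, IsometryEquiv.coeFn_toRealAffineIsometryEquiv] at h
    exact h
  have hψsymm : ∀ z : E, (ψ.symm z : E) = D.symm z + -(D.symm (ψ 0)) := by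
    intro z
    rw [ψ.symm_apply_eq, hψ]
    simp
  set S : Set ℝ := {a : ℝ | ∃ T > (0:ℝ), ∃ γ γ' : ℝ → E,
    IsPiecewiseC1On γ γ' T ∧ γ 0 = x ∧ γ T = y ∧ a = magAction θ k T γ γ'} with hSdef
  set S' : Set ℝ := {a : ℝ | ∃ T > (0:ℝ), ∃ γ γ' : ℝ → E,
    IsPiecewiseC1On γ γ' T ∧ γ 0 = ψ x ∧ γ T = ψ y ∧ a = magAction θ k T γ γ'} with hS'def
  -- S is nonempty: the straight line from x to y
  have hne : S.Nonempty := by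
    refine ⟨magAction θ k 1 (fun t => x + t • (y - x)) (fun _ => y - x),
      1, one_pos, _, _, ⟨?_, ⟨∅, ?_, continuousOn_const⟩,
        intervalIntegrable_const, intervalIntegrable_const⟩, by simp, by simp, rfl⟩
    · exact (continuous_const.add (continuous_id.smul continuous_const)).continuousOn
    · intro t _ _
      simpa using ((hasDerivAt_id t).smul_const (y - x)).const_add x
  -- S is bounded below by 0
  have hbdd : BddBelow S := by
    refine ⟨0, ?_⟩
    rintro a ⟨T, hT, γ, γ', hγ, -, -, rfl⟩
    refine intervalIntegral.integral_nonneg hT.le fun t _ => ?_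
    have h1 := (θ (γ t)).le_opNorm (γ' t)
    rw [Real.norm_eq_abs] at h1
    have h2 := hθk (γ t)
    have h3 := le_abs_self (θ (γ t) (γ' t))
    nlinarith [sq_nonneg (‖θ (γ t)‖ - ‖γ' t‖)]
  -- the set for (ψ x, ψ y) is the translate of the set for (x, y)
  have hset : S' = (fun a => a + (f y - f x)) '' S := by
    ext a
    constructor
    · rintro ⟨T, hT, δ, δ', hδ, hδ0, hδT, rfl⟩
      set γ : ℝ → E := fun t => ψ.symm (δ t) with hγdef
      set γ' : ℝ → E := fun t => D.symm (δ' t) with hγ'def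
      have hγ : IsPiecewiseC1On γ γ' T := by
        have h2 := isPiecewiseC1On_isoComp hδ D.symm (-(D.symm (ψ 0)))
        have heq : γ = fun t => D.symm (δ t) + -(D.symm (ψ 0)) :=
          funext fun t => hψsymm (δ t)
        rw [heq]; exact h2
      have hback1 : (fun t => ψ (γ t)) = δ := funext fun t => ψ.apply_symm_apply (δ t)
      have hback2 : (fun t => D (γ' t)) = δ' := funext fun t => D.apply_symm_apply (δ' t)
      have hact := magAction_isometry θ hθc k ψ f hf hdf hT.le hγ
      rw [← hD, hback1, hback2] at hact
      have hγ0 : γ 0 = x := by simp [hγdef, hδ0]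
      have hγT : γ T = y := by simp [hγdef, hδT]
      refine ⟨magAction θ k T γ γ', ⟨T, hT, γ, γ', hγ, hγ0, hγT, rfl⟩, ?_⟩
      rw [hact, hγ0, hγT]
    · rintro ⟨a, ⟨T, hT, γ, γ', hγ, hγ0, hγT, rfl⟩, rfl⟩
      refine ⟨T, hT, fun t => ψ (γ t), fun t => D (γ' t), ?_, by simp [hγ0], by simp [hγT], ?_⟩
      · have h2 := isPiecewiseC1On_isoComp hγ D (ψ 0)
        have heq : (fun t => (ψ (γ t) : E)) = fun t => D (γ t) + ψ 0 :=
          funext fun t => hψ (γ t)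
        rw [heq]; exact h2
      · rw [magAction_isometry θ hθc k ψ f hf hdf hT.le hγ, hγ0, hγT]
  -- conclude via the translation-equivariance of sInf
  have hmono : Monotone (fun a : ℝ => a + (f y - f x)) :=
    fun a b hab => add_le_add_left hab _
  have hsInf := hmono.map_csInf_of_continuousAt
    ((continuous_add_right (f y - f x)).continuousAt) hne hbdd
  show sInf S' = sInf S + f y - f x
  rw [hset, ← hsInf]
  ring
end

section
/- Let E be a finite-dimensional real inner product space, x₀ ∈ E, and let G be a group acting on E by surjective isometries, i.e., a group homomorphism ρ : G → (E ≃ᵢ E) (each ρ ψ is affine with linear part D(ρ ψ) a linear isometry; the pullback of a map θ : E → (E →L[ℝ] ℝ) under ρ ψ is ((ρ ψ)*θ) x = (θ ((ρ ψ) x)) ∘ D(ρ ψ)). Let θ : E → (E →L[ℝ] ℝ) be continuous, let φ ∈ G, and assume that (ρ τ)*θ = θ for every τ ∈ G commuting with φ. Suppose ψ₁, ψ₂ ∈ G satisfy ψ₁⁻¹ * φ * ψ₁ = ψ₂⁻¹ * φ * ψ₂, and suppose f₁, f₂ : E → ℝ are differentiable functions with fderiv fᵢ x = ((ρ ψᵢ)*θ)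 x - θ x for all x, and f₁ x₀ = f₂ x₀ = 0. Then f₁ = f₂. -/
variable {E : Type*} [NormedAddCommGroup E] [InnerProductSpace ℝ E] [FiniteDimensional ℝ E]

omit [FiniteDimensional ℝ E] in
lemma linpart_apply (ψ : E ≃ᵢ E) (v : E) :
    ψ.toRealAffineIsometryEquiv.linearIsometryEquiv v = ψ v - ψ 0 := by
  have := ψ.toRealAffineIsometryEquiv.map_vsub v 0
  simpa [IsometryEquiv.coeFn_toRealAffineIsometryEquiv] using this

omit [FiniteDimensional ℝ E] in
lemma isometryPullback_mul (e₁ e₂ : E ≃ᵢ E) (θ : E → (E →L[ℝ] ℝ)) :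
    isometryPullback (e₁ * e₂) θ = isometryPullback e₂ (isometryPullback e₁ θ) := by
  funext x
  ext v
  simp only [isometryPullback, IsometryEquiv.mul_apply, ContinuousLinearMap.comp_apply,
    ContinuousLinearEquiv.coe_coe, LinearIsometryEquiv.coe_toContinuousLinearEquiv,
    linpart_apply]
  have h := (e₁.toRealAffineIsometryEquiv.linearIsometryEquiv).map_sub (e₂ v) (e₂ 0)
  simp only [linpart_apply] at h
  congr 1
  rw [h]
  abel

/-- Lemma 5.1 of the paper: let a group `G` act on `E` by surjective isometries via
`ρ : G →* (E ≃ᵢ E)`, let `θ` be a continuous 1-form invariant under the pullback by the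
centralizer of `φ ∈ G`, and suppose `ψ₁⁻¹ φ ψ₁ = ψ₂⁻¹ φ ψ₂`.  If `fᵢ` are the primitives
of `(ρ ψᵢ)*θ - θ` normalized by `fᵢ x₀ = 0`, then `f₁ = f₂`. -/
theorem primitive_independent_of_conjugator
    {G : Type*} [Group G] (ρ : G →* (E ≃ᵢ E)) (x₀ : E)
    (θ : E → (E →L[ℝ] ℝ)) (hθc : Continuous θ)
    (φ : G)
    (hcent : ∀ τ : G, τ⁻¹ * φ * τ = φ → isometryPullback (ρ τ) θ = θ)
    (ψ₁ ψ₂ : G) (hconj : ψ₁⁻¹ * φ * ψ₁ = ψ₂⁻¹ * φ * ψ₂)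
    (f₁ f₂ : E → ℝ) (hf₁ : Differentiable ℝ f₁) (hf₂ : Differentiable ℝ f₂)
    (hdf₁ : ∀ x : E, fderiv ℝ f₁ x = isometryPullback (ρ ψ₁) θ x - θ x)
    (hdf₂ : ∀ x : E, fderiv ℝ f₂ x = isometryPullback (ρ ψ₂) θ x - θ x)
    (h₁ : f₁ x₀ = 0) (h₂ : f₂ x₀ = 0) :
    f₁ = f₂ := by
  have hτ : (ψ₁ * ψ₂⁻¹)⁻¹ * φ * (ψ₁ * ψ₂⁻¹) = φ := by
    calc (ψ₁ * ψ₂⁻¹)⁻¹ * φ * (ψ₁ * ψ₂⁻¹) = ψ₂ * (ψ₁⁻¹ * φ * ψ₁) * ψ₂⁻¹ := by group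
    _ = ψ₂ * (ψ₂⁻¹ * φ * ψ₂) * ψ₂⁻¹ := by rw [hconj]
    _ = φ := by group
  have hpull : isometryPullback (ρ ψ₁) θ = isometryPullback (ρ ψ₂) θ := by
    have hψ : ψ₁ = (ψ₁ * ψ₂⁻¹) * ψ₂ := by group
    rw [hψ, map_mul, isometryPullback_mul, hcent _ hτ]
  have hdiff : Differentiable ℝ (f₁ - f₂) := hf₁.sub hf₂
  have hzero : ∀ x : E, fderiv ℝ (f₁ - f₂) x = 0 := by
    intro x
    rw [show f₁ - f₂ = fun y => f₁ y - f₂ y from rfl, fderiv_fun_sub (hf₁ x) (hf₂ x),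
      hdf₁ x, hdf₂ x, hpull]
    simp
  funext x
  have hc := is_const_of_fderiv_eq_zero hdiff hzero x x₀
  have hsub : f₁ x - f₂ x = f₁ x₀ - f₂ x₀ := hc
  rw [h₁, h₂] at hsub
  linarith
end
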